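/- Let K be a symmetric nonnegative kernel with ∫ min{1,|x|} K(x) dx < +∞ and suppose half-spaces are local minimizers of P_K in every ball (i.e., P_K(H; B_R) ≤ P_K(F; B_R) whenever F \ B_R = H \ B_R). Then for every convex body E ⊂ ℝⁿ and every half-space H ⊂ ℝⁿ one has P_K(E ∩ H) ≤ P_K(E). -/

import Mathlib

open MeasureTheory Metric Set
open scoped ENNReal RealInnerProductSpace

/-- The `K`-interaction functional `L_K(E,F) = ∫_E ∫_F K(x-y) dx dy`. -/
noncomputable def LK {n : ℕ} (K : EuclideanSpace ℝ (Fin n) → ℝ≥0∞)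
    (E F : Set (EuclideanSpace ℝ (Fin n))) : ℝ≥0∞ :=
  ∫⁻ x in E, ∫⁻ y in F, K (x - y)

/-- The non-local `K`-perimeter `P_K(E) = L_K(E, Eᶜ)`. -/
noncomputable def PK {n : ℕ} (K : EuclideanSpace ℝ (Fin n) → ℝ≥0∞)
    (E : Set (EuclideanSpace ℝ (Fin n))) : ℝ≥0∞ :=
  LK K E Eᶜ

/-- The localized `K`-perimeter `P_K(E; A)`. -/
noncomputable def PKloc {n : ℕ} (K : EuclideanSpace ℝ (Fin n) → ℝ≥0∞)
    (E A : Set (EuclideanSpace ℝ (Fin n))) : ℝ≥0∞ :=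
  LK K (E ∩ A) (Eᶜ ∩ A) + LK K (E ∩ A) (Eᶜ ∩ Aᶜ) + LK K (E ∩ Aᶜ) (Eᶜ ∩ A)

/-! The localized perimeter `P_K(F; A)` is the `K(x - y) dx dy`-measure of the pairs `(x, y)` with
`x ∈ F`, `y ∉ F` and not both outside `A`; comparing such pair sets for `E ∩ H`, `E ∪ H`, `E`, `H`
gives submodularity `P_K(E ∩ H; A) + P_K(E ∪ H; A) ≤ P_K(E; A) + P_K(H; A)`. Take `A = B_R ⊇ E`.
Then the terms for `E ∩ H` and `E` are the full perimeters, and `E ∪ H` is a competitor for the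
half-space `H` in `B_R`, so `P_K(H; B_R) ≤ P_K(E ∪ H; B_R)`. Finally `P_K(H; B_R) < ∞`, since the
pairs at offset `z` near `∂H ∩ B_R` fill a volume `≲ min {1, |z|}`, and it can be cancelled. -/

section

variable {n : ℕ} {K : EuclideanSpace ℝ (Fin n) → ℝ≥0∞}
local notation "V" => EuclideanSpace ℝ (Fin n)

theorem measure_add_le_of_union_subset_of_inter_subset {α : Type*} [MeasurableSpace α]
    (μ : Measure α) {s t u v : Set α} (ht : MeasurableSet t) (hv : MeasurableSet v)
    (hunion : s ∪ t ⊆ u ∪ v) (hinter : s ∩ t ⊆ u ∩ v) : μ s + μ t ≤ μ u + μ v := by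
  rw [← measure_union_add_inter s ht, ← measure_union_add_inter u hv]
  exact add_le_add (measure_mono hunion) (measure_mono hinter)

variable (K) in
noncomputable def interactionMeasure : Measure (V × V) :=
  (volume.prod volume).withDensity fun p => K (p.1 - p.2)

theorem measurable_kernel_sub (hK : Measurable K) : Measurable fun p : V × V => K (p.1 - p.2) :=
  hK.comp (measurable_fst.sub measurable_snd)

theorem LK_eq_interactionMeasure (hK : Measurable K) (E F : Set V) :
    LK K E F = interactionMeasure K (E ×ˢ F) := by
  rw [interactionMeasure, withDensity_apply' _ _,
    setLIntegral_prod _ (measurable_kernel_sub hK).aemeasurable, LK]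

theorem LK_mono (hK : Measurable K) {E₁ E₂ F₁ F₂ : Set V} (hE : E₁ ⊆ E₂) (hF : F₁ ⊆ F₂) :
    LK K E₁ F₁ ≤ LK K E₂ F₂ := by
  simp only [LK_eq_interactionMeasure hK]
  exact measure_mono (prod_mono hE hF)

theorem LK_comm (hK : Measurable K) (hKsym : ∀ x : V, K (-x) = K x) (E F : Set V) :
    LK K E F = LK K F E := by
  rw [LK, LK, lintegral_lintegral_swap (measurable_kernel_sub hK).aemeasurable]
  exact lintegral_congr fun y => lintegral_congr fun x => by rw [← neg_sub, hKsym]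

theorem PKloc_eq_interactionMeasure (hK : Measurable K) {E A : Set V} (hE : MeasurableSet E)
    (hA : MeasurableSet A) :
    PKloc K E A = interactionMeasure K ((E ×ˢ Eᶜ) \ (Aᶜ ×ˢ Aᶜ)) := by
  have hsplit : (E ×ˢ Eᶜ) \ (Aᶜ ×ˢ Aᶜ) =
      ((E ∩ A) ×ˢ (Eᶜ ∩ A) ∪ (E ∩ A) ×ˢ (Eᶜ ∩ Aᶜ)) ∪ (E ∩ Aᶜ) ×ˢ (Eᶜ ∩ A) := by
    ext ⟨x, y⟩
    simp only [mem_sdiff, mem_prod, mem_union, mem_inter_iff, mem_compl_iff]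
    tauto
  rw [hsplit, measure_union, measure_union, PKloc, LK_eq_interactionMeasure hK,
    LK_eq_interactionMeasure hK, LK_eq_interactionMeasure hK]
  · rw [Set.disjoint_left]
    rintro ⟨x, y⟩
    simp only [mem_prod, mem_inter_iff, mem_compl_iff]
    tauto
  · exact (hE.inter hA).prod (hE.compl.inter hA.compl)
  · rw [Set.disjoint_left]
    rintro ⟨x, y⟩
    simp only [mem_union, mem_prod, mem_inter_iff, mem_compl_iff]
    tauto
  · exact (hE.inter hA.compl).prod (hE.compl.inter hA)

theorem PKloc_inter_add_PKloc_union_le (hK : Measurable K) {E H A : Set V}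
    (hE : MeasurableSet E) (hH : MeasurableSet H) (hA : MeasurableSet A) :
    PKloc K (E ∩ H) A + PKloc K (E ∪ H) A ≤ PKloc K E A + PKloc K H A := by
  simp only [PKloc_eq_interactionMeasure hK, hE, hH, hA, hE.inter hH, hE.union hH]
  have hprod : ∀ {S : Set V}, MeasurableSet S → MeasurableSet ((S ×ˢ Sᶜ) \ (Aᶜ ×ˢ Aᶜ)) :=
    fun hS => (hS.prod hS.compl).diff (hA.compl.prod hA.compl)
  refine measure_add_le_of_union_subset_of_inter_subset _ (hprod (hE.union hH)) (hprod hH) ?_ ?_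
  all_goals
    rintro ⟨x, y⟩
    simp only [mem_union, mem_inter_iff, mem_sdiff, mem_prod, mem_compl_iff]
    tauto

theorem PKloc_eq_PK_of_subset (hK : Measurable K) {E A : Set V} (hE : MeasurableSet E)
    (hA : MeasurableSet A) (hEA : E ⊆ A) : PKloc K E A = PK K E := by
  rw [PKloc_eq_interactionMeasure hK hE hA, PK, LK_eq_interactionMeasure hK,
    sdiff_eq_left.2 (disjoint_prod.2 (.inl (disjoint_compl_right.mono_left hEA)))]

theorem PKloc_le_LK_add_LK (hK : Measurable K) (hKsym : ∀ x : V, K (-x) = K x) {E A : Set V}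
    (hE : MeasurableSet E) (hA : MeasurableSet A) :
    PKloc K E A ≤ LK K (E ∩ A) Eᶜ + LK K (Eᶜ ∩ A) E := by
  rw [PKloc_eq_interactionMeasure hK hE hA, LK_comm hK hKsym (Eᶜ ∩ A),
    LK_eq_interactionMeasure hK, LK_eq_interactionMeasure hK]
  refine (measure_mono ?_).trans (measure_union_le _ _)
  rintro ⟨x, y⟩
  simp only [mem_union, mem_inter_iff, mem_sdiff, mem_prod, mem_compl_iff]
  tauto

theorem LK_eq_lintegral_mul_volume (hK : Measurable K) (S : Set V) {T : Set V}
    (hT : MeasurableSet T) : LK K S T = ∫⁻ z, K z * volume (S ∩ (· - z) ⁻¹' T) := by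
  have hinner : ∀ x, ∫⁻ y in T, K (x - y) = ∫⁻ z, T.indicator 1 (x - z) * K z := by
    intro x
    rw [← lintegral_indicator hT, ← lintegral_sub_left_eq_self _ x]
    refine lintegral_congr fun z => ?_
    by_cases hz : x - z ∈ T <;> simp [hz]
  calc LK K S T = ∫⁻ x in S, ∫⁻ z, T.indicator 1 (x - z) * K z := by simp only [LK, hinner]
    _ = ∫⁻ z, ∫⁻ x in S, T.indicator 1 (x - z) * K z :=
        lintegral_lintegral_swap (by fun_prop (disch := exact hT))
    _ = ∫⁻ z, K z * volume (S ∩ (· - z) ⁻¹' T) := by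
        refine lintegral_congr fun z => ?_
        rw [lintegral_mul_const _ (by fun_prop (disch := exact hT)), mul_comm]
        have hpre : MeasurableSet ((· - z) ⁻¹' T) := measurable_sub_const z hT
        rw [inter_comm, ← Measure.restrict_apply hpre, ← lintegral_indicator_one hpre]
        rfl

theorem volume_ball_inter_slab_le {ν : V} (hν : ν ≠ 0) (a b R : ℝ) :
    volume (ball (0 : V) R ∩ {x | a ≤ ⟪ν, x⟫ ∧ ⟪ν, x⟫ ≤ b}) ≤
      ENNReal.ofReal ((b - a) / ‖ν‖) * ENNReal.ofReal (2 * R) ^ (n - 1) := by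
  rcases n.eq_zero_or_pos with rfl | hn
  · exact absurd (Subsingleton.elim ν 0) hν
  set i₀ : Fin n := ⟨0, hn⟩
  obtain ⟨e, he⟩ : ∃ e : OrthonormalBasis (Fin n) ℝ V, ∀ i ∈ ({i₀} : Set (Fin n)),
      e i = ‖ν‖⁻¹ • ν := by
    refine (Orthonormal.exists_orthonormalBasis_extension_of_card_eq (by simp) ?_)
    refine ⟨fun i => norm_smul_inv_norm hν, fun i j hij => ?_⟩
    exact absurd (Subtype.ext (i.2.trans j.2.symm)) hij
  set I : Fin n → Set ℝ := Function.update (fun _ => Icc (-R) R) i₀ (Icc (a / ‖ν‖) (b / ‖ν‖))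
  have hφ : MeasurePreserving (fun x : V => WithLp.ofLp (e.repr x)) :=
    (PiLp.volume_preserving_ofLp (Fin n)).comp e.measurePreserving_repr
  have hsub : ball (0 : V) R ∩ {x | a ≤ ⟪ν, x⟫ ∧ ⟪ν, x⟫ ≤ b} ⊆
      (fun x : V => WithLp.ofLp (e.repr x)) ⁻¹' univ.pi I := by
    rintro x ⟨hxR, hxa, hxb⟩ i -
    change e.repr x i ∈ I i
    rw [e.repr_apply_apply]
    by_cases hi : i = i₀
    · rw [hi, show I i₀ = _ from Function.update_self _ _ _, he i₀ rfl, real_inner_smul_left,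
        mem_Icc, div_eq_inv_mul, div_eq_inv_mul]
      exact ⟨by gcongr, by gcongr⟩
    · rw [show I i = Icc (-R) R from Function.update_of_ne hi _ _, mem_Icc, ← abs_le]
      calc |⟪e i, x⟫| ≤ ‖e i‖ * ‖x‖ := abs_real_inner_le_norm _ _
        _ ≤ R := by rw [e.orthonormal.1 i, one_mul]; exact (mem_ball_zero_iff.1 hxR).le
  calc _ ≤ volume ((fun x : V => WithLp.ofLp (e.repr x)) ⁻¹' univ.pi I) := measure_mono hsub
    _ = ∏ i, volume (I i) := by
        rw [hφ.measure_preimage (MeasurableSet.univ_pi fun i => ?_).nullMeasurableSet, volume_pi_pi]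
        simp only [I, Function.update_apply]
        split_ifs <;> exact measurableSet_Icc
    _ = _ := by
        have hI : ∀ i ∈ Finset.univ.erase i₀, volume (I i) = ENNReal.ofReal (2 * R) := by
          intro i hi
          rw [show I i = Icc (-R) R from Function.update_of_ne (Finset.ne_of_mem_erase hi) _ _,
            Real.volume_Icc, two_mul, sub_neg_eq_add]
        rw [← Finset.mul_prod_erase _ _ (Finset.mem_univ i₀), Finset.prod_congr rfl hI,
          Finset.prod_const, Finset.card_erase_of_mem (Finset.mem_univ _), Finset.card_univ,
          Fintype.card_fin, show I i₀ = Icc (a / ‖ν‖) (b / ‖ν‖) from Function.update_self _ _ _,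
          Real.volume_Icc, div_sub_div_same]

theorem min_le_max_mul_min_one (a b t : ℝ≥0∞) : min a (t * b) ≤ max a b * min 1 t := by
  rcases le_total t 1 with h | h
  · rw [min_eq_right h, mul_comm (max a b) t]
    exact (min_le_right _ _).trans (by gcongr; exact le_max_right a b)
  · rw [min_eq_left h, mul_one]
    exact (min_le_left _ _).trans (le_max_left a b)

theorem LK_ball_inter_halfspace_lt_top (hK : Measurable K)
    (hKint : ∫⁻ x : V, min 1 (ENNReal.ofReal ‖x‖) * K x < ⊤) {ν : V} (hν : ν ≠ 0) (c R : ℝ) :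
    LK K (ball 0 R ∩ {x | ⟪ν, x⟫ ≤ c}) {y | c ≤ ⟪ν, y⟫} < ⊤ := by
  set C := max (volume (ball (0 : V) R)) (ENNReal.ofReal (2 * R) ^ (n - 1))
  have hC : C ≠ ⊤ := max_ne_top measure_ball_lt_top.ne (by finiteness)
  have hslice : ∀ z, volume (ball 0 R ∩ {x | ⟪ν, x⟫ ≤ c} ∩ (· - z) ⁻¹' {y | c ≤ ⟪ν, y⟫}) ≤
      C * min 1 (ENNReal.ofReal ‖z‖) := by
    intro z
    refine (le_min (measure_mono fun x hx => hx.1.1) ?_).trans (min_le_max_mul_min_one _ _ _)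
    have hwidth : (c - (c + ⟪ν, z⟫)) / ‖ν‖ ≤ ‖z‖ := by
      rw [div_le_iff₀ (norm_pos_iff.2 hν)]
      linarith [neg_le_abs ⟪ν, z⟫, abs_real_inner_le_norm ν z]
    calc _ ≤ volume (ball (0 : V) R ∩ {x | c + ⟪ν, z⟫ ≤ ⟪ν, x⟫ ∧ ⟪ν, x⟫ ≤ c}) := by
          refine measure_mono fun x ⟨⟨hxB, hxc⟩, hxz⟩ => ⟨hxB, ?_, hxc⟩
          simp only [mem_preimage, mem_ofPred_eq, inner_sub_right] at hxz
          linarith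
      _ ≤ _ := volume_ball_inter_slab_le hν _ _ R
      _ ≤ _ := by gcongr
  have hT : MeasurableSet {y : V | c ≤ ⟪ν, y⟫} := measurableSet_le measurable_const (by fun_prop)
  calc LK K (ball 0 R ∩ {x | ⟪ν, x⟫ ≤ c}) {y | c ≤ ⟪ν, y⟫}
      ≤ ∫⁻ z, C * (min 1 (ENNReal.ofReal ‖z‖) * K z) := by
        rw [LK_eq_lintegral_mul_volume hK _ hT]
        refine lintegral_mono fun z => ?_
        rw [mul_comm (K z), ← mul_assoc]
        exact mul_le_mul_of_nonneg_right (hslice z) zero_le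
    _ = C * ∫⁻ z, min 1 (ENNReal.ofReal ‖z‖) * K z := lintegral_const_mul' _ _ hC
    _ < ⊤ := ENNReal.mul_lt_top hC.lt_top hKint

theorem PKloc_halfspace_ball_lt_top (hK : Measurable K) (hKsym : ∀ x : V, K (-x) = K x)
    (hKint : ∫⁻ x : V, min 1 (ENNReal.ofReal ‖x‖) * K x < ⊤) {ν : V} (hν : ν ≠ 0) (c R : ℝ) :
    PKloc K {x | ⟪ν, x⟫ ≤ c} (ball 0 R) < ⊤ := by
  have hH : MeasurableSet {x : V | ⟪ν, x⟫ ≤ c} := measurableSet_le (by fun_prop) measurable_const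
  refine (PKloc_le_LK_add_LK hK hKsym hH measurableSet_ball).trans_lt
    (ENNReal.add_lt_top.2
      ⟨(LK_mono hK ?_ ?_).trans_lt (LK_ball_inter_halfspace_lt_top hK hKint hν c R),
       (LK_mono hK ?_ ?_).trans_lt
        (LK_ball_inter_halfspace_lt_top hK hKint (neg_ne_zero.2 hν) (-c) R)⟩)
  · exact (inter_comm _ _).subset
  · exact fun y (hy : ¬⟪ν, y⟫ ≤ c) => (not_le.1 hy).le
  · rintro x ⟨hx, hxB⟩
    simp only [mem_compl_iff, mem_ofPred_eq, not_le] at hx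
    exact ⟨hxB, by simp only [mem_ofPred_eq, inner_neg_left]; linarith⟩
  · intro y hy
    simp only [mem_ofPred_eq, inner_neg_left] at hy ⊢
    linarith

end

theorem stmt4_general (n : ℕ) (K : EuclideanSpace ℝ (Fin n) → ℝ≥0∞)
    (hKmeas : Measurable K)
    (hKsym : ∀ x : EuclideanSpace ℝ (Fin n), K (-x) = K x)
    (hKint : (∫⁻ x : EuclideanSpace ℝ (Fin n), min 1 (ENNReal.ofReal ‖x‖) * K x) < ⊤)
    (hmin : ∀ (ν : EuclideanSpace ℝ (Fin n)) (c : ℝ), ν ≠ 0 → ∀ R : ℝ, 0 < R →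
      ∀ F : Set (EuclideanSpace ℝ (Fin n)), MeasurableSet F →
        F \ Metric.ball 0 R = {x | ⟪ν, x⟫ ≤ c} \ Metric.ball 0 R →
        PKloc K {x | ⟪ν, x⟫ ≤ c} (Metric.ball 0 R) ≤ PKloc K F (Metric.ball 0 R))
    (E : Set (EuclideanSpace ℝ (Fin n)))
    (hEcomp : IsCompact E)
    (ν : EuclideanSpace ℝ (Fin n)) (c : ℝ) (hν : ν ≠ 0) :
    PK K (E ∩ {x | ⟪ν, x⟫ ≤ c}) ≤ PK K E := by
  have hH : MeasurableSet {x | ⟪ν, x⟫ ≤ c} := measurableSet_le (by fun_prop) measurable_const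
  have hE : MeasurableSet E := hEcomp.measurableSet
  obtain ⟨R, hR, hER⟩ := hEcomp.isBounded.subset_ball_lt 0 0
  have hB : MeasurableSet (ball (0 : EuclideanSpace ℝ (Fin n)) R) := measurableSet_ball
  have hcompetitor := hmin ν c hν R hR _ (hE.union hH)
    (by rw [union_sdiff_distrib, sdiff_eq_empty.2 hER, empty_union])
  have hsubmod := PKloc_inter_add_PKloc_union_le hKmeas hE hH hB
  rw [PKloc_eq_PK_of_subset hKmeas (hE.inter hH) hB (inter_subset_left.trans hER),
    PKloc_eq_PK_of_subset hKmeas hE hB hER] at hsubmod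
  exact (ENNReal.add_le_add_iff_right (PKloc_halfspace_ball_lt_top hKmeas hKsym hKint hν c R).ne).1
    ((add_le_add_right hcompetitor _).trans hsubmod)

/-- If half-spaces are local minimizers of `P_K` in every ball, then intersecting a convex
body with a half-space does not increase the `K`-perimeter. -/
theorem stmt4 (n : ℕ) (K : EuclideanSpace ℝ (Fin n) → ℝ≥0∞)
    (hKmeas : Measurable K)
    (hKsym : ∀ x : EuclideanSpace ℝ (Fin n), K (-x) = K x)
    (hKint : (∫⁻ x : EuclideanSpace ℝ (Fin n), min 1 (ENNReal.ofReal ‖x‖) * K x) < ⊤)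
    (hmin : ∀ (ν : EuclideanSpace ℝ (Fin n)) (c : ℝ), ν ≠ 0 → ∀ R : ℝ, 0 < R →
      ∀ F : Set (EuclideanSpace ℝ (Fin n)), MeasurableSet F →
        F \ Metric.ball 0 R = {x | ⟪ν, x⟫ ≤ c} \ Metric.ball 0 R →
        PKloc K {x | ⟪ν, x⟫ ≤ c} (Metric.ball 0 R) ≤ PKloc K F (Metric.ball 0 R))
    (E : Set (EuclideanSpace ℝ (Fin n)))
    (hEcomp : IsCompact E) (hEconv : Convex ℝ E) (hEint : (interior E).Nonempty)
    (ν : EuclideanSpace ℝ (Fin n)) (c : ℝ) (hν : ν ≠ 0) :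
    PK K (E ∩ {x | ⟪ν, x⟫ ≤ c}) ≤ PK K E :=
  stmt4_general n K hKmeas hKsym hKint hmin E hEcomp ν c hν
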